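/- arXiv:1909.13604 — 6 statements merged into one kernel-verified Lean document; each statement's English description precedes it below -/
import Mathlib

section
/- Input-failure refinement is equivalent to inclusion of input-failure closures: for interface automata s₁, s₂, Ftraces(s₁) ⊆ fcl(Ftraces(s₂)) if and only if fcl(Ftraces(s₁)) ⊆ fcl(Ftraces(s₂)). Consequently s₁ ≡_if s₂ iff fcl(Ftraces(s₁)) = fcl(Ftraces(s₂)). -/
/-- An interface automaton over inputs `In`, outputs `Out`, states `State`. -/
structure IA (In Out State : Type) where
  init : State
  tr : State → (In ⊕ Out) → State → Prop

namespace IA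

variable {In Out State State1 State2 State3 : Type}

/-- One-step successor sets. -/
def step (s : IA In Out State) (P : Set State) (ℓ : In ⊕ Out) : Set State :=
  {q' | ∃ q ∈ P, s.tr q ℓ q'}

/-- `s after σ`: states reachable from the initial state via word `σ`. -/
def after (s : IA In Out State) (σ : List (In ⊕ Out)) : Set State :=
  σ.foldl s.step {s.init}

/-- Traces of `s`. -/
def traces (s : IA In Out State) : Set (List (In ⊕ Out)) :=
  {σ | (s.after σ).Nonempty}

/-- Inputs enabled in *all* states of `P`. -/
def inSet (s : IA In Out State) (P : Set State) : Set In :=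
  {a | ∀ q ∈ P, ∃ q', s.tr q (Sum.inl a) q'}

/-- Outputs enabled in *some* state of `P`. -/
def outSet (s : IA In Out State) (P : Set State) : Set Out :=
  {x | ∃ q ∈ P, ∃ q', s.tr q (Sum.inr x) q'}

end IA

/-- Input-failure traces: a word over `L = In ⊕ Out` possibly followed by a
    final input-failure symbol `ā` (encoded as `some a`). -/
abbrev FTrace (In Out : Type) := List (In ⊕ Out) × Option In

/-- A set of input-failure traces is input-failure closed. -/
def fclosed {In Out : Type} (S : Set (FTrace In Out)) : Prop :=
  ∀ (σ : List (In ⊕ Out)) (a : In) (ρ : FTrace In Out),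
    (σ, some a) ∈ S → (σ ++ Sum.inl a :: ρ.1, ρ.2) ∈ S

/-- Input-failure closure. -/
def fcl {In Out : Type} (S : Set (FTrace In Out)) : Set (FTrace In Out) :=
  S ∪ {t | ∃ (σ : List (In ⊕ Out)) (a : In) (ρ : FTrace In Out),
        (σ, some a) ∈ S ∧ t = (σ ++ Sum.inl a :: ρ.1, ρ.2)}

namespace IA

variable {In Out State State1 State2 State3 : Type}

/-- Input-failure traces of an IA. -/
def Ftraces (s : IA In Out State) : Set (FTrace In Out) :=
  {t | (t.2 = none ∧ t.1 ∈ s.traces) ∨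
       (∃ a, t.2 = some a ∧ a ∉ s.inSet (s.after t.1))}

/-- Input-failure refinement. -/
def refIF (s1 : IA In Out State1) (s2 : IA In Out State2) : Prop :=
  s1.Ftraces ⊆ fcl s2.Ftraces

/-- Output-existential words of `s`. -/
def OE (s : IA In Out State) : Set (List (In ⊕ Out)) :=
  {σ | ∀ ρ x τ, σ = ρ ++ Sum.inr x :: τ → x ∈ s.outSet (s.after ρ)}

/-- Input-universal words of `s`. -/
def IU (s : IA In Out State) : Set (List (In ⊕ Out)) :=
  {σ | ∀ ρ a τ, σ = ρ ++ Sum.inl a :: τ → a ∈ s.inSet (s.after ρ)}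

/-- Input-universal / output-existential refinement. -/
def refIUOE (s1 : IA In Out State1) (s2 : IA In Out State2) : Prop :=
  s1.OE ∩ s2.IU ⊆ s1.IU ∩ s2.OE

/-- Utraces: traces where every occurring input is enabled in all states
    reached by the preceding prefix. -/
def Utraces (s : IA In Out State) : Set (List (In ⊕ Out)) :=
  {σ | σ ∈ s.traces ∧
       ∀ ρ a, (ρ ++ [Sum.inl a]) <+: σ → a ∈ s.inSet (s.after ρ)}

/-- `Δ`: add a `δ`-selfloop (a fresh output) to each quiescent state. -/
def delta (s : IA In Out State) : IA In (Out ⊕ Unit) State where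
  init := s.init
  tr := fun q ℓ q' =>
    match ℓ with
    | Sum.inl a => s.tr q (Sum.inl a) q'
    | Sum.inr (Sum.inl x) => s.tr q (Sum.inr x) q'
    | Sum.inr (Sum.inr _) => q' = q ∧ ∀ x q'', ¬ s.tr q (Sum.inr x) q''

/-- `i uioco s`. -/
def uioco (i : IA In Out State1) (s : IA In Out State2) : Prop :=
  ∀ σ ∈ (delta s).Utraces,
    (delta i).outSet ((delta i).after σ) ⊆ (delta s).outSet ((delta s).after σ) ∧
    (delta s).inSet ((delta s).after σ) ⊆ (delta i).inSet ((delta i).after σ)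

/-! ### Game framework -/

/-- A (finite) path: a list of (label, target-state) steps from the initial state. -/
abbrev Path (In Out State : Type) := List ((In ⊕ Out) × State)

/-- The state reached just before step `n` of `π` (the initial state for `n = 0`). -/
def stateAt (s : IA In Out State) (π : Path In Out State) : ℕ → State
  | 0 => s.init
  | Nat.succ m => ((π[m]?).map Prod.snd).getD s.init

/-- The final state of a path. -/
def lastState (s : IA In Out State) (π : Path In Out State) : State :=
  stateAt s π π.length

/-- Validity of a path. -/
def IsPath (s : IA In Out State) (π : Path In Out State) : Prop :=
  ∀ n p, π[n]? = some p → s.tr (stateAt s π n) p.1 p.2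

/-- Output strategies. -/
structure OutStrat (s : IA In Out State) where
  f : Path In Out State → Option Out
  valid : ∀ π x, IsPath s π → f π = some x →
    ∃ q', s.tr (lastState s π) (Sum.inr x) q'

/-- Input strategies. -/
structure InStrat (s : IA In Out State) where
  f : Path In Out State → Option In
  valid : ∀ π a, IsPath s π → f π = some a →
    ∃ q', s.tr (lastState s π) (Sum.inl a) q'

/-- Determinization strategies. -/
structure DetStrat (s : IA In Out State) where
  f : Path In Out State → (In ⊕ Out) → Option State
  total : ∀ π ℓ, IsPath s π → (∃ q', s.tr (lastState s π) ℓ q') → (f π ℓ).isSome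
  valid : ∀ π ℓ q', IsPath s π → f π ℓ = some q' → s.tr (lastState s π) ℓ q'

/-- Race-condition strategies: `false` = prefer input, `true` = prefer output. -/
abbrev RaceStrat (In Out State : Type) := Path In Out State → Bool

/-- An input strategy is trace-based if it depends only on the trace of the path. -/
def TraceBased (s : IA In Out State) (fi : InStrat s) : Prop :=
  ∀ π π', IsPath s π → IsPath s π' →
    π.map Prod.fst = π'.map Prod.fst → fi.f π = fi.f π'

/-- Extend a path by label `ℓ` using the determinization strategy. -/
def push (s : IA In Out State) (fd : DetStrat s) (π : Path In Out State)
    (ℓ : In ⊕ Out) : Path In Out State :=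
  match fd.f π ℓ with
  | some q => π ++ [(ℓ, q)]
  | none => π

/-- One step of the strategy-driven execution. -/
def gstep (s : IA In Out State) (fi : InStrat s) (fo : OutStrat s)
    (fd : DetStrat s) (fr : RaceStrat In Out State)
    (π : Path In Out State) : Path In Out State :=
  match fi.f π, fo.f π with
  | some a, none => push s fd π (Sum.inl a)
  | none, some x => push s fd π (Sum.inr x)
  | some a, some x => if fr π then push s fd π (Sum.inr x) else push s fd π (Sum.inl a)
  | none, none => π

/-- The `n`-th label of the (finite or infinite) outcome of the four strategies. -/
def outcomeTrace (s : IA In Out State) (fi : InStrat s) (fo : OutStrat s)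
    (fd : DetStrat s) (fr : RaceStrat In Out State) (n : ℕ) : Option (In ⊕ Out) :=
  (((gstep s fi fo fd fr)^[n + 1] ([] : Path In Out State))[n]?).map Prod.fst

/-- Alternating-trace containment for IA. -/
def refATC (s1 : IA In Out State1) (s2 : IA In Out State2) : Prop :=
  ∀ (fo1 : OutStrat s1) (fd1 : DetStrat s1) (fr1 : RaceStrat In Out State1),
  ∃ (fo2 : OutStrat s2) (fd2 : DetStrat s2) (fr2 : RaceStrat In Out State2),
  ∀ (fi2 : InStrat s2), ∃ (fi1 : InStrat s1),
    ∀ n, outcomeTrace s1 fi1 fo1 fd1 fr1 n = outcomeTrace s2 fi2 fo2 fd2 fr2 n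

/-- The reordered, trace-based game relation `≤_{∀∀∃∃}^{tb}`. -/
def refAAEEtb (s1 : IA In Out State1) (s2 : IA In Out State2) : Prop :=
  ∀ (fi2 : InStrat s2), TraceBased s2 fi2 →
  ∀ (fo1 : OutStrat s1) (fd1 : DetStrat s1) (fr1 : RaceStrat In Out State1),
  ∃ (fi1 : InStrat s1), TraceBased s1 fi1 ∧
  ∃ (fo2 : OutStrat s2) (fd2 : DetStrat s2) (fr2 : RaceStrat In Out State2),
    ∀ n, outcomeTrace s1 fi1 fo1 fd1 fr1 n = outcomeTrace s2 fi2 fo2 fd2 fr2 n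

/-- Alternating simulation. -/
def IsAltSim (s1 : IA In Out State1) (s2 : IA In Out State2)
    (R : State1 → State2 → Prop) : Prop :=
  ∀ q1 q2, R q1 q2 →
    (s1.outSet {q1} ⊆ s2.outSet {q2}) ∧
    (s2.inSet {q2} ⊆ s1.inSet {q1}) ∧
    (∀ a q1', a ∈ s2.inSet {q2} → s1.tr q1 (Sum.inl a) q1' →
       ∃ q2', s2.tr q2 (Sum.inl a) q2' ∧ R q1' q2') ∧
    (∀ x q1', s1.tr q1 (Sum.inr x) q1' →
       ∃ q2', s2.tr q2 (Sum.inr x) q2' ∧ R q1' q2')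

/-- Greatest alternating simulation relates the initial states. -/
def refAS (s1 : IA In Out State1) (s2 : IA In Out State2) : Prop :=
  ∃ R, IsAltSim s1 s2 R ∧ R s1.init s2.init

/-- Image finiteness. -/
def ImageFinite (s : IA In Out State) : Prop :=
  ∀ q ℓ, {q' | s.tr q ℓ q'}.Finite

/-- Input-universal determinization (subset construction restricted to
    universally enabled inputs and existentially enabled outputs). -/
def detIU (s : IA In Out State) : IA In Out (Set State) where
  init := {s.init}
  tr := fun P ℓ P' => P.Nonempty ∧
    (match ℓ with
     | Sum.inl a => a ∈ s.inSet P
     | Sum.inr x => x ∈ s.outSet P) ∧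
    P' = s.step P ℓ

end IA

lemma fcl_subset {In Out : Type} (S : Set (FTrace In Out)) : S ⊆ fcl S :=
  Set.subset_union_left

lemma fclosed_fcl {In Out : Type} (S : Set (FTrace In Out)) : fclosed (fcl S) := by
  rintro σ a ρ (h | ⟨σ', a', ρ', h', heq⟩)
  · exact Or.inr ⟨σ, a, ρ, h, rfl⟩
  · obtain ⟨h1, h2⟩ := Prod.mk.injEq .. ▸ heq
    refine Or.inr ⟨σ', a', (ρ'.1 ++ Sum.inl a :: ρ.1, ρ.2), h', ?_⟩
    simp [h1]

lemma fcl_min {In Out : Type} {S T : Set (FTrace In Out)} (h : S ⊆ fcl T) :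
    fcl S ⊆ fcl T := by
  rintro t (ht | ⟨σ, a, ρ, hS, rfl⟩)
  · exact h ht
  · exact fclosed_fcl T σ a ρ (h hS)

open IA in
theorem stmt2 (In Out State1 State2 : Type)
    (s1 : IA In Out State1) (s2 : IA In Out State2) :
    (s1.refIF s2 ↔ fcl s1.Ftraces ⊆ fcl s2.Ftraces) ∧
    ((s1.refIF s2 ∧ s2.refIF s1) ↔ fcl s1.Ftraces = fcl s2.Ftraces) := by
  have h1 : s1.refIF s2 ↔ fcl s1.Ftraces ⊆ fcl s2.Ftraces :=
    ⟨fun h => fcl_min h, fun h => (fcl_subset _).trans h⟩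
  refine ⟨h1, ?_⟩
  have h2 : s2.refIF s1 ↔ fcl s2.Ftraces ⊆ fcl s1.Ftraces :=
    ⟨fun h => fcl_min h, fun h => (fcl_subset _).trans h⟩
  rw [h1, h2]
  constructor
  · exact fun ⟨a, b⟩ => Set.Subset.antisymm a b
  · exact fun h => ⟨h.le, h.ge⟩
end

section
/- Input-failure refinement ≤_if on interface automata is a preorder: it is reflexive and transitive. -/
section FailureClosure

variable {In Out : Type}

lemma subset_fcl (S : Set (FTrace In Out)) : S ⊆ fcl S :=
  Set.subset_union_left

lemma fcl_mono {S T : Set (FTrace In Out)} (h : S ⊆ T) : fcl S ⊆ fcl T := by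
  rintro t (ht | ⟨σ, a, ρ, hσ, rfl⟩)
  · exact Or.inl (h ht)
  · exact Or.inr ⟨σ, a, ρ, h hσ, rfl⟩

lemma fcl_fcl (S : Set (FTrace In Out)) : fcl (fcl S) = fcl S := by
  refine (subset_fcl _).antisymm' ?_
  rintro t (ht | ⟨σ, a, ρ, hσ | ⟨σ', a', ρ', hσ', hEq⟩, rfl⟩)
  · exact ht
  · exact Or.inr ⟨σ, a, ρ, hσ, rfl⟩
  · -- the failure `σ'ā'` already absorbs the whole extension `ρ'.1 ++ a :: ρ.1`
    obtain ⟨rfl, -⟩ := Prod.mk.inj hEq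
    exact Or.inr ⟨σ', a', (ρ'.1 ++ Sum.inl a :: ρ.1, ρ.2), hσ', by simp⟩

end FailureClosure

namespace IA

variable {In Out State State1 State2 State3 : Type}

lemma refIF_refl (s : IA In Out State) : s.refIF s :=
  subset_fcl _

lemma refIF_trans {s1 : IA In Out State1} {s2 : IA In Out State2} {s3 : IA In Out State3}
    (h12 : s1.refIF s2) (h23 : s2.refIF s3) : s1.refIF s3 :=
  calc s1.Ftraces ⊆ fcl s2.Ftraces := h12
    _ ⊆ fcl (fcl s3.Ftraces) := fcl_mono h23
    _ = fcl s3.Ftraces := fcl_fcl _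

end IA

open IA in
theorem stmt3 (In Out : Type) :
    (∀ (State : Type) (s : IA In Out State), s.refIF s) ∧
    (∀ (State1 State2 State3 : Type)
       (s1 : IA In Out State1) (s2 : IA In Out State2) (s3 : IA In Out State3),
       s1.refIF s2 → s2.refIF s3 → s1.refIF s3) :=
  ⟨fun _ => refIF_refl, fun _ _ _ _ _ _ => refIF_trans⟩
end

section
/- For any interface automaton s: IU(s) ∩ fcl(Ftraces(s)) ⊆ traces(s). -/
open IA in
theorem stmt6 (In Out State : Type) (s : IA In Out State) (σ : List (In ⊕ Out)) :
    σ ∈ s.IU → ((σ, none) : FTrace In Out) ∈ fcl s.Ftraces → σ ∈ s.traces := by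
  intro hIU hfcl
  rcases hfcl with hF | ⟨ρ, a, τ, hρ, heq⟩
  · rcases hF with ⟨_, h⟩ | ⟨a, ha, _⟩
    · exact h
    · simp at ha
  · rcases hρ with ⟨hnone, _⟩ | ⟨b, hb, hnb⟩
    · simp at hnone
    · obtain rfl : a = b := by simpa using hb
      have hσ : σ = ρ ++ Sum.inl a :: τ.1 := by
        have := congrArg Prod.fst heq; simpa using this
      exact absurd (hIU ρ a τ.1 hσ) hnb
end

section
/- For any interface automaton s: IU(s) ∩ OE(s) = IU(s) ∩ traces(s). -/
namespace IA
variable {In Out State : Type}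

lemma after_append (s : IA In Out State) (σ τ : List (In ⊕ Out)) :
    s.after (σ ++ τ) = τ.foldl s.step (s.after σ) := by
  simp [after, List.foldl_append]

lemma step_empty (s : IA In Out State) (ℓ : In ⊕ Out) : s.step ∅ ℓ = ∅ := by
  ext q'; simp [step]

lemma foldl_empty (s : IA In Out State) (τ : List (In ⊕ Out)) :
    τ.foldl s.step ∅ = ∅ := by
  induction τ with
  | nil => rfl
  | cons ℓ τ ih => simp [step_empty, ih]

lemma traces_subset_OE (s : IA In Out State) : s.traces ⊆ s.OE := by
  intro σ hσ ρ x τ hdec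
  subst hdec
  have h : s.after (ρ ++ Sum.inr x :: τ) ≠ ∅ := by
    intro h; exact Set.Nonempty.ne_empty hσ h
  have hstep : s.after (ρ ++ [Sum.inr x]) ≠ ∅ := by
    intro he
    apply h
    have : ρ ++ Sum.inr x :: τ = (ρ ++ [Sum.inr x]) ++ τ := by simp
    rw [this, after_append, he, foldl_empty]
  rw [after_append] at hstep
  simp only [List.foldl_cons, List.foldl_nil] at hstep
  rw [← Set.nonempty_iff_ne_empty] at hstep
  obtain ⟨q', q, hq, htr⟩ := hstep
  exact ⟨q, hq, q', htr⟩

lemma IU_OE_nonempty (s : IA In Out State) (σ : List (In ⊕ Out))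
    (hIU : σ ∈ s.IU) (hOE : σ ∈ s.OE) : (s.after σ).Nonempty := by
  induction σ using List.reverseRecOn with
  | nil => exact ⟨s.init, rfl⟩
  | append_singleton σ ℓ ih =>
    have hIU' : σ ∈ s.IU := by
      intro ρ a τ hdec
      exact hIU ρ a (τ ++ [ℓ]) (by simp [hdec])
    have hOE' : σ ∈ s.OE := by
      intro ρ x τ hdec
      exact hOE ρ x (τ ++ [ℓ]) (by simp [hdec])
    have hne := ih hIU' hOE'
    rw [after_append]
    simp only [List.foldl_cons, List.foldl_nil]
    cases ℓ with
    | inl a =>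
      have ha := hIU σ a [] (by simp)
      obtain ⟨q, hq⟩ := hne
      obtain ⟨q', hq'⟩ := ha q hq
      exact ⟨q', q, hq, hq'⟩
    | inr x =>
      have hx := hOE σ x [] (by simp)
      obtain ⟨q, hq, q', hq'⟩ := hx
      exact ⟨q', q, hq, hq'⟩

end IA

open IA in
theorem stmt7 (In Out State : Type) (s : IA In Out State) :
    s.IU ∩ s.OE = s.IU ∩ s.traces := by
  ext σ
  constructor
  · rintro ⟨h1, h2⟩
    exact ⟨h1, IU_OE_nonempty s σ h1 h2⟩
  · rintro ⟨h1, h2⟩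
    exact ⟨h1, traces_subset_OE s h2⟩
end

section
/- Input-failure refinement coincides with input-universal/output-existential refinement: for interface automata s₁, s₂ over the same alphabets, s₁ ≤_if s₂ if and only if OE(s₁) ∩ IU(s₂) ⊆ IU(s₁) ∩ OE(s₂). -/
section Aux

variable {In Out State : Type}

lemma IA.after_concat (s : IA In Out State) (σ : List (In ⊕ Out)) (ℓ : In ⊕ Out) :
    s.after (σ ++ [ℓ]) = s.step (s.after σ) ℓ := by
  simp [IA.after, List.foldl_append]

lemma IA.step_ne (s : IA In Out State) {P : Set State} {ℓ : In ⊕ Out}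
    (h : (s.step P ℓ).Nonempty) : P.Nonempty := by
  obtain ⟨q', q, hq, -⟩ := h
  exact ⟨q, hq⟩

lemma IA.traces_append (s : IA In Out State) {σ τ : List (In ⊕ Out)}
    (h : σ ++ τ ∈ s.traces) : σ ∈ s.traces := by
  induction τ generalizing σ with
  | nil => simpa using h
  | cons ℓ τ ih =>
      have h2 : (σ ++ [ℓ]) ++ τ ∈ s.traces := by simpa using h
      have h3 := ih h2
      have h4 : (s.step (s.after σ) ℓ).Nonempty := by
        rw [← IA.after_concat]; exact h3
      exact IA.step_ne s h4

lemma IA.traces_subset_OE_s8 (s : IA In Out State) : s.traces ⊆ s.OE := by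
  intro σ hσ ρ x τ hdec
  subst hdec
  have h1 : ρ ++ [Sum.inr x] ∈ s.traces := by
    have h0 : (ρ ++ [Sum.inr x]) ++ τ ∈ s.traces := by simpa using hσ
    exact IA.traces_append s h0
  have h2 : (s.step (s.after ρ) (Sum.inr x)).Nonempty := by
    rw [← IA.after_concat]; exact h1
  obtain ⟨q', q, hq, htr⟩ := h2
  exact ⟨q, hq, q', htr⟩

lemma IA.IU_OE_traces (s : IA In Out State) {σ : List (In ⊕ Out)}
    (hIU : σ ∈ s.IU) (hOE : σ ∈ s.OE) : σ ∈ s.traces := by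
  induction σ using List.reverseRecOn with
  | nil => exact ⟨s.init, rfl⟩
  | append_singleton σ ℓ ih =>
      have hIU' : σ ∈ s.IU := fun ρ a τ h => hIU ρ a (τ ++ [ℓ]) (by simp [h])
      have hOE' : σ ∈ s.OE := fun ρ x τ h => hOE ρ x (τ ++ [ℓ]) (by simp [h])
      have hne := ih hIU' hOE'
      show (s.after (σ ++ [ℓ])).Nonempty
      rw [IA.after_concat]
      cases ℓ with
      | inl a =>
          obtain ⟨q, hq⟩ := hne
          obtain ⟨q', hq'⟩ := hIU σ a [] rfl q hq
          exact ⟨q', q, hq, hq'⟩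
      | inr x =>
          obtain ⟨q, hq, q', hq'⟩ := hOE σ x [] rfl
          exact ⟨q', q, hq, hq'⟩

lemma IA.notin_inSet_traces (s : IA In Out State) {σ : List (In ⊕ Out)} {a : In}
    (h : a ∉ s.inSet (s.after σ)) : σ ∈ s.traces := by
  by_contra hne
  exact h (fun q hq => absurd ⟨q, hq⟩ hne)

lemma split_concat {α : Type} {σ' ρ τ : List α} {ℓ' ℓ : α}
    (h : σ' ++ ℓ' :: τ = ρ ++ [ℓ]) (hne : ℓ' ≠ ℓ) :
    ∃ τ₃, ρ = σ' ++ ℓ' :: τ₃ := by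
  rcases List.eq_nil_or_concat τ with rfl | ⟨τ₃, ℓ'', rfl⟩
  · obtain ⟨h1, h2⟩ := List.append_inj' h rfl
    simp only [List.cons.injEq] at h2
    exact absurd h2.1 hne
  · rw [List.concat_eq_append,
      show σ' ++ ℓ' :: (τ₃ ++ [ℓ'']) = (σ' ++ ℓ' :: τ₃) ++ [ℓ''] by simp] at h
    obtain ⟨h1, -⟩ := List.append_inj' h rfl
    exact ⟨τ₃, h1.symm⟩

end Aux

open IA in
theorem stmt8 (In Out State1 State2 : Type)
    (s1 : IA In Out State1) (s2 : IA In Out State2) :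
    s1.refIF s2 ↔ s1.refIUOE s2 := by
  constructor
  · -- refIF → refIUOE
    intro h σ ⟨hOE1, hIU2⟩
    constructor
    · -- σ ∈ IU s1
      intro ρ a τ hdec
      by_contra hna
      have hF1 : ((ρ, some a) : FTrace In Out) ∈ s1.Ftraces := Or.inr ⟨a, rfl, hna⟩
      rcases h hF1 with hF2 | ⟨σ', b, ρ', hmem, heq⟩
      · rcases hF2 with ⟨h0, -⟩ | ⟨b, hb, hnb⟩
        · simp at h0
        · simp only at hb
          injection hb with hb; subst hb
          exact hnb (hIU2 ρ a τ hdec)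
      · have h1 : ρ = σ' ++ Sum.inl b :: ρ'.1 := congrArg Prod.fst heq
        rcases hmem with ⟨h0, -⟩ | ⟨c, hc, hnc⟩
        · simp at h0
        · simp only at hc
          injection hc with hc; subst hc
          have : σ = σ' ++ Sum.inl b :: (ρ'.1 ++ Sum.inl a :: τ) := by
            simp [hdec, h1]
          exact hnc (hIU2 σ' b _ this)
    · -- σ ∈ OE s2
      intro ρ x τ hdec
      have hx : x ∈ s1.outSet (s1.after ρ) := hOE1 ρ x τ hdec
      have htr1 : ρ ++ [Sum.inr x] ∈ s1.traces := by
        show (s1.after (ρ ++ [Sum.inr x])).Nonempty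
        rw [IA.after_concat]
        obtain ⟨q, hq, q', htr⟩ := hx
        exact ⟨q', q, hq, htr⟩
      have hF1 : ((ρ ++ [Sum.inr x], none) : FTrace In Out) ∈ s1.Ftraces :=
        Or.inl ⟨rfl, htr1⟩
      rcases h hF1 with hF2 | ⟨σ', b, ρ', hmem, heq⟩
      · rcases hF2 with ⟨-, htr2⟩ | ⟨b, hb, -⟩
        · have h2 : (s2.step (s2.after ρ) (Sum.inr x)).Nonempty := by
            rw [← IA.after_concat]; exact htr2
          obtain ⟨q', q, hq, htr⟩ := h2
          exact ⟨q, hq, q', htr⟩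
        · simp at hb
      · have h1 : σ' ++ Sum.inl b :: ρ'.1 = ρ ++ [Sum.inr x] :=
          (congrArg Prod.fst heq).symm
        obtain ⟨τ₃, hτ₃⟩ := split_concat h1 (by simp)
        rcases hmem with ⟨h0, -⟩ | ⟨c, hc, hnc⟩
        · simp at h0
        · simp only at hc
          injection hc with hc; subst hc
          have : σ = σ' ++ Sum.inl b :: (τ₃ ++ Sum.inr x :: τ) := by
            simp [hdec, hτ₃]
          exact absurd (hIU2 σ' b _ this) hnc
  · -- refIUOE → refIF
    intro h t ht
    by_contra hnot
    have hnF2 : t ∉ s2.Ftraces := fun hm => hnot (Or.inl hm)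
    have hIU2 : t.1 ∈ s2.IU := by
      intro ρ b τ hdec
      by_contra hb
      have hmem : ((ρ, some b) : FTrace In Out) ∈ s2.Ftraces := Or.inr ⟨b, rfl, hb⟩
      exact hnot (Or.inr ⟨ρ, b, (τ, t.2), hmem, by
        apply Prod.ext <;> simp [hdec]⟩)
    rcases ht with ⟨hnone, htr1⟩ | ⟨a, hsome, hna⟩
    · have hOE1 : t.1 ∈ s1.OE := IA.traces_subset_OE_s8 s1 htr1
      obtain ⟨-, hOE2⟩ := h ⟨hOE1, hIU2⟩
      exact hnF2 (Or.inl ⟨hnone, IA.IU_OE_traces s2 hIU2 hOE2⟩)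
    · have ha2 : a ∈ s2.inSet (s2.after t.1) := by
        by_contra ha
        exact hnF2 (Or.inr ⟨a, hsome, ha⟩)
      have htr1 : t.1 ∈ s1.traces := IA.notin_inSet_traces s1 hna
      have hOE1' : t.1 ++ [Sum.inl a] ∈ s1.OE := by
        intro ρ x τ hdec
        obtain ⟨τ₃, hτ₃⟩ := split_concat hdec.symm (by simp)
        exact IA.traces_subset_OE_s8 s1 htr1 ρ x τ₃ hτ₃
      have hIU2' : t.1 ++ [Sum.inl a] ∈ s2.IU := by
        intro ρ b τ hdec
        rcases List.eq_nil_or_concat τ with rfl | ⟨τ₃, ℓ'', rfl⟩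
        · obtain ⟨h1, h2⟩ := List.append_inj' hdec rfl
          simp only [List.cons.injEq, Sum.inl.injEq] at h2
          rw [h2.1] at ha2
          rw [← h1]
          exact ha2
        · rw [List.concat_eq_append,
            show ρ ++ Sum.inl b :: (τ₃ ++ [ℓ'']) = (ρ ++ Sum.inl b :: τ₃) ++ [ℓ''] by
            simp] at hdec
          obtain ⟨h1, -⟩ := List.append_inj' hdec rfl
          exact hIU2 ρ b τ₃ h1
      obtain ⟨hIU1', -⟩ := h ⟨hOE1', hIU2'⟩
      exact hna (hIU1' t.1 a [] rfl)
end

section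
/- The game-based relation with reordered quantifiers and trace-based input strategies implies iuoe-refinement: if s₁ ≤_{∀∀∃∃}^{tb} s₂ then OE(s₁) ∩ IU(s₂) ⊆ IU(s₁) ∩ OE(s₂). -/
/-! ### Auxiliary lemmas -/

namespace IA

variable {In Out State : Type}

lemma after_append_singleton (s : IA In Out State) (σ : List (In ⊕ Out)) (ℓ : In ⊕ Out) :
    s.after (σ ++ [ℓ]) = s.step (s.after σ) ℓ := by
  simp [after, List.foldl_append]

lemma stateAt_append (s : IA In Out State) (π π' : Path In Out State) {n : ℕ}
    (h : n ≤ π.length) : stateAt s (π ++ π') n = stateAt s π n := by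
  cases n with
  | zero => rfl
  | succ m => simp [stateAt, List.getElem?_append_left (show m < π.length by omega)]

lemma lastState_append_singleton (s : IA In Out State) (π : Path In Out State)
    (p : (In ⊕ Out) × State) : lastState s (π ++ [p]) = p.2 := by
  simp [lastState, stateAt, List.getElem?_concat_length]

lemma stateAt_take (s : IA In Out State) (π : Path In Out State) {k n : ℕ}
    (hk : k ≤ n) : stateAt s (π.take n) k = stateAt s π k := by
  cases k with
  | zero => rfl
  | succ m => simp [stateAt, List.getElem?_take_of_lt (show m < n by omega)]

lemma lastState_take (s : IA In Out State) (π : Path In Out State) {n : ℕ}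
    (h : n ≤ π.length) : lastState s (π.take n) = stateAt s π n := by
  have hl : (π.take n).length = n := by simp [h]
  rw [lastState, hl, stateAt_take s π le_rfl]

lemma isPath_nil (s : IA In Out State) : IsPath s ([] : Path In Out State) := by
  intro n p hp; simp at hp

lemma isPath_take (s : IA In Out State) {π : Path In Out State} (h : IsPath s π) (n : ℕ) :
    IsPath s (π.take n) := by
  intro k p hk
  have hkn : k < n := by
    by_contra hc
    rw [List.getElem?_eq_none_iff.2 (by simp; omega)] at hk
    simp at hk
  rw [List.getElem?_take_of_lt hkn] at hk
  rw [stateAt_take s π (by omega)]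
  exact h k p hk

lemma isPath_append_singleton (s : IA In Out State) {π : Path In Out State}
    {p : (In ⊕ Out) × State} (h : IsPath s π) (htr : s.tr (lastState s π) p.1 p.2) :
    IsPath s (π ++ [p]) := by
  intro n q hq
  rcases lt_trichotomy n π.length with hn | hn | hn
  · rw [List.getElem?_append_left hn] at hq
    rw [stateAt_append s π [p] (by omega)]
    exact h n q hq
  · subst hn
    rw [List.getElem?_concat_length] at hq
    cases hq
    rw [stateAt_append s π [p] le_rfl]
    exact htr
  · rw [List.getElem?_eq_none_iff.2 (by simp; omega)] at hq
    simp at hq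

lemma isPath_drop_last (s : IA In Out State) {π : Path In Out State}
    {p : (In ⊕ Out) × State} (h : IsPath s (π ++ [p])) : IsPath s π := by
  have := isPath_take s h π.length
  rwa [List.take_left] at this

lemma lastState_mem_after (s : IA In Out State) :
    ∀ {π : Path In Out State}, IsPath s π → lastState s π ∈ s.after (π.map Prod.fst) := by
  intro π
  induction π using List.reverseRecOn with
  | nil =>
    intro _
    simp [lastState, stateAt, after]
  | append_singleton π p ih =>
    intro h
    have hπ : IsPath s π := isPath_drop_last s h
    have htr : s.tr (lastState s π) p.1 p.2 := by
      have := h π.length p (by rw [List.getElem?_concat_length])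
      rwa [stateAt_append s π [p] le_rfl] at this
    rw [lastState_append_singleton, List.map_append, List.map_singleton, after_append_singleton]
    exact ⟨lastState s π, ih hπ, htr⟩

lemma mem_after_run (s : IA In Out State) :
    ∀ {σ : List (In ⊕ Out)} {q : State}, q ∈ s.after σ →
      ∃ π : Path In Out State, IsPath s π ∧ π.map Prod.fst = σ ∧ lastState s π = q := by
  intro σ
  induction σ using List.reverseRecOn with
  | nil =>
    intro q hq
    simp [after] at hq
    exact ⟨[], isPath_nil s, rfl, by simp [lastState, stateAt, hq]⟩
  | append_singleton σ ℓ ih =>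
    intro q hq
    rw [after_append_singleton] at hq
    obtain ⟨q₀, hq₀, htr⟩ := hq
    obtain ⟨π, hπ, htrace, hlast⟩ := ih hq₀
    refine ⟨π ++ [(ℓ, q)], isPath_append_singleton s hπ (by rw [hlast]; exact htr), ?_, ?_⟩
    · simp [htrace]
    · exact lastState_append_singleton s π (ℓ, q)

lemma push_eq_or (s : IA In Out State) (fd : DetStrat s) (π : Path In Out State)
    (ℓ : In ⊕ Out) : push s fd π ℓ = π ∨
      ∃ q, fd.f π ℓ = some q ∧ push s fd π ℓ = π ++ [(ℓ, q)] := by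
  unfold push
  cases h : fd.f π ℓ with
  | none => exact Or.inl rfl
  | some q => exact Or.inr ⟨q, rfl, rfl⟩

lemma isPath_push (s : IA In Out State) (fd : DetStrat s) {π : Path In Out State}
    (h : IsPath s π) (ℓ : In ⊕ Out) : IsPath s (push s fd π ℓ) := by
  rcases push_eq_or s fd π ℓ with he | ⟨q, hq, he⟩ <;> rw [he]
  · exact h
  · exact isPath_append_singleton s h (fd.valid π ℓ q h hq)

lemma isPath_gstep (s : IA In Out State) (fi : InStrat s) (fo : OutStrat s)
    (fd : DetStrat s) (fr : RaceStrat In Out State) {π : Path In Out State}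
    (h : IsPath s π) : IsPath s (gstep s fi fo fd fr π) := by
  rcases hfi : fi.f π with _ | a <;> rcases hfo : fo.f π with _ | x <;>
    simp only [gstep, hfi, hfo]
  · exact h
  · exact isPath_push s fd h _
  · exact isPath_push s fd h _
  · split <;> exact isPath_push s fd h _

lemma gstep_eq_or (s : IA In Out State) (fi : InStrat s) (fo : OutStrat s)
    (fd : DetStrat s) (fr : RaceStrat In Out State) (π : Path In Out State) :
    gstep s fi fo fd fr π = π ∨ ∃ p, gstep s fi fo fd fr π = π ++ [p] := by
  unfold gstep
  have hp : ∀ ℓ, push s fd π ℓ = π ∨ ∃ p, push s fd π ℓ = π ++ [p] := by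
    intro ℓ
    rcases push_eq_or s fd π ℓ with he | ⟨q, _, he⟩
    · exact Or.inl he
    · exact Or.inr ⟨_, he⟩
  rcases hfi : fi.f π with _ | a <;> rcases hfo : fo.f π with _ | x <;>
      simp only [hfi, hfo] <;>
    first
      | exact Or.inl rfl
      | exact Or.inl trivial
      | exact hp _
      | (split <;> exact hp _)

lemma isPath_iterate (s : IA In Out State) (fi : InStrat s) (fo : OutStrat s)
    (fd : DetStrat s) (fr : RaceStrat In Out State) (n : ℕ) :
    IsPath s ((gstep s fi fo fd fr)^[n] []) := by
  induction n with
  | zero => exact isPath_nil s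
  | succ m ih =>
    rw [Function.iterate_succ_apply']
    exact isPath_gstep s fi fo fd fr ih

lemma list_decomp {α : Type*} {l : List α} {n : ℕ} {a : α} (h : l[n]? = some a) :
    l = l.take n ++ a :: l.drop (n+1) := by
  have h1 : n < l.length := (List.getElem?_eq_some_iff.1 h).choose
  conv_lhs => rw [← List.take_append_drop n l, List.drop_eq_getElem_cons h1]
  rw [List.getElem?_eq_getElem h1] at h
  rw [Option.some_inj.1 h]

lemma take_succ' {α : Type*} {l : List α} {n : ℕ} {a : α} (h : l[n]? = some a) :
    l.take (n+1) = l.take n ++ [a] := by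
  rw [List.take_succ, h]; rfl

lemma get?_some_lt {α : Type*} {l : List α} {n : ℕ} {a : α} (h : l[n]? = some a) :
    n < l.length := by
  exact (List.getElem?_eq_some_iff.1 h).choose

lemma getRight?_eq_some {α β : Type*} {x : α ⊕ β} {b : β} (h : x.getRight? = some b) :
    x = Sum.inr b := by
  cases x <;> simp_all [Sum.getRight?]

lemma getLeft?_eq_some {α β : Type*} {x : α ⊕ β} {a : α} (h : x.getLeft? = some a) :
    x = Sum.inl a := by
  cases x <;> simp_all [Sum.getLeft?]

open Classical in
/-- Output strategy on `s` following the fixed run `π₀`. -/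
noncomputable def oStrat (s : IA In Out State) (π₀ : Path In Out State)
    (hp : IsPath s π₀) : OutStrat s where
  f π := if π = π₀.take π.length then (π₀[π.length]?).bind (fun p => p.1.getRight?)
         else none
  valid := by
    intro π x hπ hfx
    by_cases hc : π = π₀.take π.length
    · rw [if_pos hc] at hfx
      obtain ⟨p, hget, hR⟩ := Option.bind_eq_some_iff.1 hfx
      have hl : p.1 = Sum.inr x := getRight?_eq_some hR
      have hn : π.length < π₀.length := get?_some_lt hget
      have hls := lastState_take s π₀ (le_of_lt hn)
      rw [← hc] at hls
      have htr := hp π.length p hget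
      rw [hl] at htr
      exact ⟨p.2, by rw [hls]; exact htr⟩
    · rw [if_neg hc] at hfx
      simp at hfx

open Classical in
lemma oStrat_f_eq (s : IA In Out State) (π₀ : Path In Out State) (hp : IsPath s π₀)
    (π : Path In Out State) (hc : π = π₀.take π.length) :
    (oStrat s π₀ hp).f π = (π₀[π.length]?).bind (fun p => p.1.getRight?) := by
  simp only [oStrat]
  rw [if_pos hc]

open Classical in
/-- Determinization strategy on `s` following the fixed run `π₀`. -/
noncomputable def dStrat (s : IA In Out State) (π₀ : Path In Out State)
    (hp : IsPath s π₀) : DetStrat s where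
  f π ℓ :=
    if h1 : ∃ p, π₀[π.length]? = some p ∧ p.1 = ℓ ∧ π = π₀.take π.length then
      some h1.choose.2
    else if h2 : ∃ q', s.tr (lastState s π) ℓ q' then some h2.choose else none
  total := by
    intro π ℓ hπ hen
    split_ifs <;> simp_all
  valid := by
    intro π ℓ q' hπ hf
    split_ifs at hf with h1 h2
    · obtain ⟨hget, hl, hπeq⟩ := h1.choose_spec
      cases hf
      have hn : π.length < π₀.length := get?_some_lt hget
      have hls := lastState_take s π₀ (le_of_lt hn)
      rw [← hπeq] at hls
      have htr := hp π.length h1.choose hget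
      rw [hl] at htr
      rw [hls]
      exact htr
    · cases hf
      exact h2.choose_spec

open Classical in
lemma dStrat_f_eq (s : IA In Out State) (π₀ : Path In Out State) (hp : IsPath s π₀)
    (π : Path In Out State) (p : (In ⊕ Out) × State)
    (hget : π₀[π.length]? = some p) (hc : π = π₀.take π.length) :
    (dStrat s π₀ hp).f π p.1 = some p.2 := by
  have h1 : ∃ p', π₀[π.length]? = some p' ∧ p'.1 = p.1 ∧ π = π₀.take π.length :=
    ⟨p, hget, rfl, hc⟩
  simp only [dStrat]
  rw [dif_pos h1]
  have hsp := h1.choose_spec.1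
  rw [hsp] at hget
  rw [Option.some_inj.1 hget]

open Classical in
/-- Trace-based input strategy on `s` following the word `σ`. -/
noncomputable def iStrat (s : IA In Out State) (σ : List (In ⊕ Out)) (hIU : σ ∈ s.IU) :
    InStrat s where
  f π := if π.map Prod.fst = σ.take π.length then (σ[π.length]?).bind Sum.getLeft?
         else none
  valid := by
    intro π a hπ hf
    by_cases hc : π.map Prod.fst = σ.take π.length
    · rw [if_pos hc] at hf
      obtain ⟨ℓ, hget, hL⟩ := Option.bind_eq_some_iff.1 hf
      have hl : ℓ = Sum.inl a := getLeft?_eq_some hL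
      subst hl
      have hdec := list_decomp hget
      have hin := hIU (σ.take π.length) a (σ.drop (π.length + 1)) hdec
      have hlast := lastState_mem_after s hπ
      rw [hc] at hlast
      exact hin _ hlast
    · rw [if_neg hc] at hf
      simp at hf

open Classical in
lemma iStrat_f_eq (s : IA In Out State) (σ : List (In ⊕ Out)) (hIU : σ ∈ s.IU)
    (π : Path In Out State) (hc : π.map Prod.fst = σ.take π.length) :
    (iStrat s σ hIU).f π = (σ[π.length]?).bind Sum.getLeft? := by
  simp only [iStrat]
  rw [if_pos hc]

open Classical in
lemma iStrat_traceBased (s : IA In Out State) (σ : List (In ⊕ Out)) (hIU : σ ∈ s.IU) :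
    TraceBased s (iStrat s σ hIU) := by
  intro π π' _ _ hmap
  have hlen : π.length = π'.length := by
    have := congrArg List.length hmap
    simpa using this
  simp only [iStrat, hmap, hlen]

section MainConstruction

variable {In Out State1 State2 : Type}

lemma pi0_length (s1 : IA In Out State1) {σ : List (In ⊕ Out)} {m₀ : ℕ} (hm : m₀ ≤ σ.length)
    {π₀ : Path In Out State1} (ht : π₀.map Prod.fst = σ.take m₀) : π₀.length = m₀ := by
  have := congrArg List.length ht
  rw [List.length_map, List.length_take] at this
  omega

lemma getmap (s1 : IA In Out State1) {σ : List (In ⊕ Out)} {m₀ : ℕ}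
    {π₀ : Path In Out State1} (ht : π₀.map Prod.fst = σ.take m₀)
    {k : ℕ} (hk : k < m₀) : (π₀[k]?).map Prod.fst = σ[k]? := by
  rw [← List.getElem?_map, ht, List.getElem?_take_of_lt hk]

lemma inlStep (s1 : IA In Out State1) (s2 : IA In Out State2)
    (σ : List (In ⊕ Out)) (hIU : σ ∈ s2.IU) (m₀ : ℕ) (hm : m₀ ≤ σ.length)
    (π₀ : Path In Out State1) (hp : IsPath s1 π₀) (ht : π₀.map Prod.fst = σ.take m₀)
    (fi1 : InStrat s1) (fo2 : OutStrat s2) (fd2 : DetStrat s2)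
    (fr2 : RaceStrat In Out State2)
    (houtc : ∀ k, outcomeTrace s1 fi1 (oStrat s1 π₀ hp) (dStrat s1 π₀ hp) (fun _ => true) k
        = outcomeTrace s2 (iStrat s2 σ hIU) fo2 fd2 fr2 k)
    (n : ℕ) (hn : n ≤ m₀)
    (hP1 : (gstep s1 fi1 (oStrat s1 π₀ hp) (dStrat s1 π₀ hp) (fun _ => true))^[n] [] = π₀.take n)
    (hP2 : ((gstep s2 (iStrat s2 σ hIU) fo2 fd2 fr2)^[n] []).map Prod.fst = σ.take n)
    (a : In) (ha : σ[n]? = some (Sum.inl a)) :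
    fi1.f (π₀.take n) = some a ∧
    (∃ q2, (gstep s2 (iStrat s2 σ hIU) fo2 fd2 fr2)^[n+1] []
        = (gstep s2 (iStrat s2 σ hIU) fo2 fd2 fr2)^[n] [] ++ [(Sum.inl a, q2)]) ∧
    (n < m₀ →
      (gstep s1 fi1 (oStrat s1 π₀ hp) (dStrat s1 π₀ hp) (fun _ => true))^[n+1] []
        = π₀.take (n+1)) := by
  have hσlen : n < σ.length := get?_some_lt ha
  have hπ₀len : π₀.length = m₀ := pi0_length s1 hm ht
  have hP1len : ((gstep s1 fi1 (oStrat s1 π₀ hp) (dStrat s1 π₀ hp) (fun _ => true))^[n] []).length = n := by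
    rw [hP1, List.length_take]; omega
  have hP2len : (((gstep s2 (iStrat s2 σ hIU) fo2 fd2 fr2)^[n] [])).length = n := by
    have := congrArg List.length hP2
    rw [List.length_map, List.length_take] at this
    omega
  have hpath1 : IsPath s1 ((gstep s1 fi1 (oStrat s1 π₀ hp) (dStrat s1 π₀ hp) (fun _ => true))^[n] []) :=
    isPath_iterate s1 _ _ _ _ n
  have hpath2 : IsPath s2 ((gstep s2 (iStrat s2 σ hIU) fo2 fd2 fr2)^[n] []) :=
    isPath_iterate s2 _ _ _ _ n
  -- the output strategy on s1 offers nothing here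
  have hfo1 : (oStrat s1 π₀ hp).f ((gstep s1 fi1 (oStrat s1 π₀ hp) (dStrat s1 π₀ hp) (fun _ => true))^[n] []) = none := by
    rw [oStrat_f_eq s1 π₀ hp _ (by rw [hP1len]; exact hP1), hP1len]
    rcases Nat.lt_or_ge n m₀ with hlt | hge
    · obtain ⟨p, hpget, hpfst⟩ : ∃ p, π₀[n]? = some p ∧ p.1 = Sum.inl a := by
        have hh := getmap s1 ht hlt
        rw [ha] at hh
        exact Option.map_eq_some_iff.1 hh
      rw [hpget]
      simp [hpfst, Sum.getRight?]
    · rw [List.getElem?_eq_none_iff.2 (by omega)]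
      rfl
  -- the input strategy on s2 offers `a`
  have hfi2 : (iStrat s2 σ hIU).f ((gstep s2 (iStrat s2 σ hIU) fo2 fd2 fr2)^[n] []) = some a := by
    rw [iStrat_f_eq s2 σ hIU _ (by rw [hP2len]; exact hP2), hP2len, ha]
    rfl
  -- `a` is enabled in the current state of s2
  have hen2 : ∃ q', s2.tr (lastState s2 ((gstep s2 (iStrat s2 σ hIU) fo2 fd2 fr2)^[n] [])) (Sum.inl a) q' := by
    have hdec := list_decomp ha
    have hin := hIU (σ.take n) a (σ.drop (n+1)) hdec
    have hlast := lastState_mem_after s2 hpath2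
    rw [hP2] at hlast
    exact hin _ hlast
  -- the s2 side always extends its path
  have hstep2 : ∃ p2, (gstep s2 (iStrat s2 σ hIU) fo2 fd2 fr2)^[n+1] []
      = (gstep s2 (iStrat s2 σ hIU) fo2 fd2 fr2)^[n] [] ++ [p2] ∧
      (p2.1 = Sum.inl a ∨ ∃ x, p2.1 = Sum.inr x) := by
    rw [Function.iterate_succ_apply']
    have hinpush : ∃ q2, push s2 fd2 ((gstep s2 (iStrat s2 σ hIU) fo2 fd2 fr2)^[n] []) (Sum.inl a)
        = (gstep s2 (iStrat s2 σ hIU) fo2 fd2 fr2)^[n] [] ++ [(Sum.inl a, q2)] := by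
      have hsome := fd2.total _ (Sum.inl a) hpath2 hen2
      obtain ⟨q2, hq2⟩ := Option.isSome_iff_exists.1 hsome
      exact ⟨q2, by simp [push, hq2]⟩
    obtain ⟨q2, hpp⟩ := hinpush
    rcases hfo2v : fo2.f ((gstep s2 (iStrat s2 σ hIU) fo2 fd2 fr2)^[n] []) with _ | x
    · refine ⟨(Sum.inl a, q2), ?_, Or.inl rfl⟩
      simp only [gstep, hfi2, hfo2v]
      exact hpp
    · rcases hfr2v : fr2 ((gstep s2 (iStrat s2 σ hIU) fo2 fd2 fr2)^[n] []) with _ | _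
      · refine ⟨(Sum.inl a, q2), ?_, Or.inl rfl⟩
        simp only [gstep, hfi2, hfo2v, hfr2v, Bool.false_eq_true, if_false]
        exact hpp
      · have hen2x : ∃ q', s2.tr (lastState s2 ((gstep s2 (iStrat s2 σ hIU) fo2 fd2 fr2)^[n] [])) (Sum.inr x) q' :=
          fo2.valid _ x hpath2 hfo2v
        have hsome := fd2.total _ (Sum.inr x) hpath2 hen2x
        obtain ⟨q2, hq2⟩ := Option.isSome_iff_exists.1 hsome
        refine ⟨(Sum.inr x, q2), ?_, Or.inr ⟨x, rfl⟩⟩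
        simp only [gstep, hfi2, hfo2v, hfr2v, if_true]
        simp [push, hq2]
  obtain ⟨p2, hg2eq, hp2⟩ := hstep2
  have hget2 : ((gstep s2 (iStrat s2 σ hIU) fo2 fd2 fr2)^[n+1] [])[n]? = some p2 := by
    rw [hg2eq]
    have : ((gstep s2 (iStrat s2 σ hIU) fo2 fd2 fr2)^[n] [] ++ [p2])[
        ((gstep s2 (iStrat s2 σ hIU) fo2 fd2 fr2)^[n] []).length]? = some p2 :=
      List.getElem?_concat_length
    rwa [hP2len] at this
  have houtcn : (((gstep s1 fi1 (oStrat s1 π₀ hp) (dStrat s1 π₀ hp) (fun _ => true))^[n+1] [])[n]?).map Prod.fst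
      = (((gstep s2 (iStrat s2 σ hIU) fo2 fd2 fr2)^[n+1] [])[n]?).map Prod.fst := houtc n
  -- the s1 side must play an input, and it must be `a`
  rcases hfi1v : fi1.f ((gstep s1 fi1 (oStrat s1 π₀ hp) (dStrat s1 π₀ hp) (fun _ => true))^[n] []) with _ | b
  · exfalso
    have hgs1 : (gstep s1 fi1 (oStrat s1 π₀ hp) (dStrat s1 π₀ hp) (fun _ => true))^[n+1] []
        = (gstep s1 fi1 (oStrat s1 π₀ hp) (dStrat s1 π₀ hp) (fun _ => true))^[n] [] := by
      rw [Function.iterate_succ_apply']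
      simp only [gstep, hfi1v, hfo1]
    rw [hgs1, List.getElem?_eq_none_iff.2 (by omega), hget2] at houtcn
    simp at houtcn
  · have hen1 : ∃ q', s1.tr (lastState s1 ((gstep s1 fi1 (oStrat s1 π₀ hp) (dStrat s1 π₀ hp) (fun _ => true))^[n] [])) (Sum.inl b) q' :=
      fi1.valid _ b hpath1 hfi1v
    have hsome1 := (dStrat s1 π₀ hp).total _ (Sum.inl b) hpath1 hen1
    obtain ⟨q1, hq1⟩ := Option.isSome_iff_exists.1 hsome1
    have hgs1 : (gstep s1 fi1 (oStrat s1 π₀ hp) (dStrat s1 π₀ hp) (fun _ => true))^[n+1] []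
        = (gstep s1 fi1 (oStrat s1 π₀ hp) (dStrat s1 π₀ hp) (fun _ => true))^[n] [] ++ [(Sum.inl b, q1)] := by
      rw [Function.iterate_succ_apply']
      simp only [gstep, hfi1v, hfo1]
      simp [push, hq1]
    have hget1 : ((gstep s1 fi1 (oStrat s1 π₀ hp) (dStrat s1 π₀ hp) (fun _ => true))^[n+1] [])[n]? = some (Sum.inl b, q1) := by
      rw [hgs1]
      have := List.getElem?_concat_length (l := (gstep s1 fi1 (oStrat s1 π₀ hp) (dStrat s1 π₀ hp) (fun _ => true))^[n] []) (a := (Sum.inl b, q1))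
      rwa [hP1len] at this
    rw [hget1, hget2] at houtcn
    have hfst : Sum.inl b = p2.1 := by
      simpa using houtcn
    have hba : b = a := by
      rcases hp2 with hh | ⟨x, hh⟩
      · rw [hh] at hfst
        exact Sum.inl.inj hfst
      · rw [hh] at hfst
        exact absurd hfst (by simp)
    subst hba
    have hp2a : p2.1 = Sum.inl b := hfst.symm
    refine ⟨by rw [← hP1]; exact hfi1v, ⟨p2.2, by rw [hg2eq, ← hp2a]⟩, ?_⟩
    intro hlt
    obtain ⟨pn, hpget, hpfst⟩ : ∃ p, π₀[n]? = some p ∧ p.1 = Sum.inl b := by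
      have hh := getmap s1 ht hlt
      rw [ha] at hh
      exact Option.map_eq_some_iff.1 hh
    have hfd1 : (dStrat s1 π₀ hp).f ((gstep s1 fi1 (oStrat s1 π₀ hp) (dStrat s1 π₀ hp) (fun _ => true))^[n] []) pn.1 = some pn.2 :=
      dStrat_f_eq s1 π₀ hp _ pn (by rw [hP1len]; exact hpget) (by rw [hP1len]; exact hP1)
    rw [hpfst] at hfd1
    rw [hfd1] at hq1
    have hq1pn : q1 = pn.2 := Option.some_inj.1 hq1.symm
    rw [hgs1, hP1, take_succ' hpget]
    have hpn : (Sum.inl b, q1) = pn := by rw [← hpfst, hq1pn]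
    rw [hpn]

lemma outStep (s1 : IA In Out State1) (s2 : IA In Out State2)
    (σ : List (In ⊕ Out)) (hIU : σ ∈ s2.IU) (m₀ : ℕ) (hm : m₀ ≤ σ.length)
    (π₀ : Path In Out State1) (hp : IsPath s1 π₀) (ht : π₀.map Prod.fst = σ.take m₀)
    (fi1 : InStrat s1) (fo2 : OutStrat s2) (fd2 : DetStrat s2)
    (fr2 : RaceStrat In Out State2)
    (houtc : ∀ k, outcomeTrace s1 fi1 (oStrat s1 π₀ hp) (dStrat s1 π₀ hp) (fun _ => true) k
        = outcomeTrace s2 (iStrat s2 σ hIU) fo2 fd2 fr2 k)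
    (n : ℕ) (hn : n < m₀)
    (hP1 : (gstep s1 fi1 (oStrat s1 π₀ hp) (dStrat s1 π₀ hp) (fun _ => true))^[n] [] = π₀.take n)
    (hP2 : ((gstep s2 (iStrat s2 σ hIU) fo2 fd2 fr2)^[n] []).map Prod.fst = σ.take n)
    (x : Out) (hx : σ[n]? = some (Sum.inr x)) :
    (gstep s1 fi1 (oStrat s1 π₀ hp) (dStrat s1 π₀ hp) (fun _ => true))^[n+1] [] = π₀.take (n+1) ∧
    ∃ p2, (gstep s2 (iStrat s2 σ hIU) fo2 fd2 fr2)^[n+1] []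
        = (gstep s2 (iStrat s2 σ hIU) fo2 fd2 fr2)^[n] [] ++ [p2] ∧ p2.1 = Sum.inr x := by
  have hσlen : n < σ.length := get?_some_lt hx
  have hπ₀len : π₀.length = m₀ := pi0_length s1 hm ht
  have hP1len : ((gstep s1 fi1 (oStrat s1 π₀ hp) (dStrat s1 π₀ hp) (fun _ => true))^[n] []).length = n := by
    rw [hP1, List.length_take]; omega
  have hP2len : (((gstep s2 (iStrat s2 σ hIU) fo2 fd2 fr2)^[n] [])).length = n := by
    have := congrArg List.length hP2
    rw [List.length_map, List.length_take] at this
    omega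
  have hpath1 : IsPath s1 ((gstep s1 fi1 (oStrat s1 π₀ hp) (dStrat s1 π₀ hp) (fun _ => true))^[n] []) :=
    isPath_iterate s1 _ _ _ _ n
  obtain ⟨pn, hpget, hpfst⟩ : ∃ p, π₀[n]? = some p ∧ p.1 = Sum.inr x := by
    have hh := getmap s1 ht hn
    rw [hx] at hh
    exact Option.map_eq_some_iff.1 hh
  have hfo1 : (oStrat s1 π₀ hp).f ((gstep s1 fi1 (oStrat s1 π₀ hp) (dStrat s1 π₀ hp) (fun _ => true))^[n] []) = some x := by
    rw [oStrat_f_eq s1 π₀ hp _ (by rw [hP1len]; exact hP1), hP1len, hpget]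
    simp [hpfst, Sum.getRight?]
  have hfd1 : (dStrat s1 π₀ hp).f ((gstep s1 fi1 (oStrat s1 π₀ hp) (dStrat s1 π₀ hp) (fun _ => true))^[n] []) pn.1 = some pn.2 :=
    dStrat_f_eq s1 π₀ hp _ pn (by rw [hP1len]; exact hpget) (by rw [hP1len]; exact hP1)
  rw [hpfst] at hfd1
  have hgs1 : (gstep s1 fi1 (oStrat s1 π₀ hp) (dStrat s1 π₀ hp) (fun _ => true))^[n+1] []
      = (gstep s1 fi1 (oStrat s1 π₀ hp) (dStrat s1 π₀ hp) (fun _ => true))^[n] [] ++ [(Sum.inr x, pn.2)] := by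
    rw [Function.iterate_succ_apply']
    rcases hfi1v : fi1.f ((gstep s1 fi1 (oStrat s1 π₀ hp) (dStrat s1 π₀ hp) (fun _ => true))^[n] []) with _ | b <;>
      simp [gstep, hfi1v, hfo1, push, hfd1]
  have hout1 : (((gstep s1 fi1 (oStrat s1 π₀ hp) (dStrat s1 π₀ hp) (fun _ => true))^[n+1] [])[n]?) = some (Sum.inr x, pn.2) := by
    rw [hgs1]
    have := List.getElem?_concat_length (l := (gstep s1 fi1 (oStrat s1 π₀ hp) (dStrat s1 π₀ hp) (fun _ => true))^[n] []) (a := (Sum.inr x, pn.2))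
    rwa [hP1len] at this
  have hconc1 : (gstep s1 fi1 (oStrat s1 π₀ hp) (dStrat s1 π₀ hp) (fun _ => true))^[n+1] [] = π₀.take (n+1) := by
    rw [hgs1, hP1, take_succ' hpget]
    have hpn : (Sum.inr x, pn.2) = pn := by rw [← hpfst]
    rw [hpn]
  have houtcn : (((gstep s1 fi1 (oStrat s1 π₀ hp) (dStrat s1 π₀ hp) (fun _ => true))^[n+1] [])[n]?).map Prod.fst
      = (((gstep s2 (iStrat s2 σ hIU) fo2 fd2 fr2)^[n+1] [])[n]?).map Prod.fst := houtc n
  rw [hout1] at houtcn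
  refine ⟨hconc1, ?_⟩
  rcases gstep_eq_or s2 (iStrat s2 σ hIU) fo2 fd2 fr2 ((gstep s2 (iStrat s2 σ hIU) fo2 fd2 fr2)^[n] []) with he | ⟨p2, he⟩
  · rw [Function.iterate_succ_apply', he, List.getElem?_eq_none_iff.2 (by omega)] at houtcn
    simp at houtcn
  · have hget2 : ((gstep s2 (iStrat s2 σ hIU) fo2 fd2 fr2)^[n+1] [])[n]? = some p2 := by
      rw [Function.iterate_succ_apply', he]
      have := List.getElem?_concat_length (l := (gstep s2 (iStrat s2 σ hIU) fo2 fd2 fr2)^[n] []) (a := p2)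
      rwa [hP2len] at this
    rw [hget2] at houtcn
    have : Sum.inr x = p2.1 := by simpa using houtcn
    exact ⟨p2, by rw [Function.iterate_succ_apply', he], this.symm⟩

lemma mainAux (s1 : IA In Out State1) (s2 : IA In Out State2)
    (h : s1.refAAEEtb s2)
    (σ : List (In ⊕ Out)) (hIU : σ ∈ s2.IU) (m₀ : ℕ) (hm : m₀ ≤ σ.length)
    (π₀ : Path In Out State1) (hp : IsPath s1 π₀) (ht : π₀.map Prod.fst = σ.take m₀) :
    (∀ a, σ[m₀]? = some (Sum.inl a) → ∃ q', s1.tr (lastState s1 π₀) (Sum.inl a) q') ∧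
    (∃ π₂ : Path In Out State2, IsPath s2 π₂ ∧ π₂.map Prod.fst = σ.take m₀) := by
  obtain ⟨fi1, _, fo2, fd2, fr2, heq⟩ :=
    h (iStrat s2 σ hIU) (iStrat_traceBased s2 σ hIU) (oStrat s1 π₀ hp) (dStrat s1 π₀ hp)
      (fun _ => true)
  have hπ₀len : π₀.length = m₀ := pi0_length s1 hm ht
  have key : ∀ n, n ≤ m₀ →
      (gstep s1 fi1 (oStrat s1 π₀ hp) (dStrat s1 π₀ hp) (fun _ => true))^[n] [] = π₀.take n ∧
      ((gstep s2 (iStrat s2 σ hIU) fo2 fd2 fr2)^[n] []).map Prod.fst = σ.take n := by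
    intro n
    induction n with
    | zero => exact fun _ => ⟨by simp, by simp⟩
    | succ k ih =>
      intro hk
      obtain ⟨h1, h2⟩ := ih (by omega)
      have hkσ : k < σ.length := by omega
      rcases hσk : σ[k]? with _ | ℓ
      · rw [List.getElem?_eq_none_iff] at hσk; omega
      rcases ℓ with a | x
      · obtain ⟨_, ⟨q2, hg2⟩, hg1⟩ :=
          inlStep s1 s2 σ hIU m₀ hm π₀ hp ht fi1 fo2 fd2 fr2 heq k (by omega) h1 h2 a hσk
        refine ⟨hg1 (by omega), ?_⟩
        rw [hg2, List.map_append, h2, take_succ' hσk]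
        rfl
      · obtain ⟨hg1, p2, hg2, hp2⟩ :=
          outStep s1 s2 σ hIU m₀ hm π₀ hp ht fi1 fo2 fd2 fr2 heq k (by omega) h1 h2 x hσk
        refine ⟨hg1, ?_⟩
        rw [hg2, List.map_append, h2, take_succ' hσk]
        simp [hp2]
  constructor
  · intro a ha
    obtain ⟨h1, h2⟩ := key m₀ le_rfl
    obtain ⟨hfi, _, _⟩ :=
      inlStep s1 s2 σ hIU m₀ hm π₀ hp ht fi1 fo2 fd2 fr2 heq m₀ le_rfl h1 h2 a ha
    have htake : π₀.take m₀ = π₀ := by rw [← hπ₀len]; exact List.take_length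
    rw [htake] at hfi
    exact fi1.valid π₀ a hp hfi
  · obtain ⟨_, h2⟩ := key m₀ le_rfl
    exact ⟨_, isPath_iterate s2 _ _ _ _ m₀, h2⟩

end MainConstruction

end IA

open IA in
theorem stmt14 (In Out State1 State2 : Type)
    (s1 : IA In Out State1) (s2 : IA In Out State2)
    (h : s1.refAAEEtb s2) : s1.refIUOE s2 := by
  intro σ hσ
  obtain ⟨hOE, hIU⟩ := hσ
  constructor
  · -- σ ∈ s1.IU
    intro ρ a τ hσeq
    intro q hq
    obtain ⟨π₀, hπ₀, htr, hlast⟩ := mem_after_run s1 hq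
    have hm : ρ.length ≤ σ.length := by
      rw [hσeq, List.length_append]; omega
    have htake : σ.take ρ.length = ρ := by rw [hσeq]; exact List.take_left
    have hget : σ[ρ.length]? = some (Sum.inl a) := by
      rw [hσeq, List.getElem?_append_right le_rfl]; simp
    have hmain := (mainAux s1 s2 h σ hIU ρ.length hm π₀ hπ₀ (by rw [htake]; exact htr)).1 a hget
    rwa [hlast] at hmain
  · -- σ ∈ s2.OE
    intro ρ x τ hσeq
    obtain ⟨q, hq, q', hq'⟩ := hOE ρ x τ hσeq
    obtain ⟨π₀, hπ₀, htr, hlast⟩ := mem_after_run s1 hq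
    have hπ₀' : IsPath s1 (π₀ ++ [(Sum.inr x, q')]) :=
      isPath_append_singleton s1 hπ₀ (by rw [hlast]; exact hq')
    have hm : ρ.length + 1 ≤ σ.length := by
      rw [hσeq, List.length_append]; simp
    have htake : σ.take ρ.length = ρ := by rw [hσeq]; exact List.take_left
    have hget : σ[ρ.length]? = some (Sum.inr x) := by
      rw [hσeq, List.getElem?_append_right le_rfl]; simp
    have htrace' : (π₀ ++ [(Sum.inr x, q')]).map Prod.fst = σ.take (ρ.length + 1) := by
      rw [take_succ' hget, htake, List.map_append, htr]; rfl
    obtain ⟨π₂, hπ₂path, hπ₂tr⟩ :=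
      (mainAux s1 s2 h σ hIU (ρ.length + 1) hm (π₀ ++ [(Sum.inr x, q')]) hπ₀' htrace').2
    have hπ₂tr' : π₂.map Prod.fst = ρ ++ [Sum.inr x] := by
      rw [hπ₂tr, take_succ' hget, htake]
    have hπ₂len : π₂.length = ρ.length + 1 := by
      have := congrArg List.length hπ₂tr'
      simpa using this
    obtain ⟨p, hpget, hpfst⟩ : ∃ p, π₂[ρ.length]? = some p ∧ p.1 = Sum.inr x := by
      have hh : (π₂.map Prod.fst)[ρ.length]? = some (Sum.inr x) := by
        rw [hπ₂tr']
        exact (List.getElem?_concat_length (l := ρ) (a := Sum.inr x))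
      rw [List.getElem?_map] at hh
      exact Option.map_eq_some_iff.1 hh
    have htr2 : s2.tr (stateAt s2 π₂ ρ.length) p.1 p.2 := hπ₂path ρ.length p hpget
    have hstate : stateAt s2 π₂ ρ.length ∈ s2.after ρ := by
      have h1 : IsPath s2 (π₂.take ρ.length) := isPath_take s2 hπ₂path ρ.length
      have h2 := lastState_mem_after s2 h1
      rw [lastState_take s2 π₂ (by omega)] at h2
      have h3 : (π₂.take ρ.length).map Prod.fst = ρ := by
        rw [List.map_take, hπ₂tr', List.take_left]
      rwa [h3] at h2
    exact ⟨_, hstate, p.2, by rw [← hpfst]; exact htr2⟩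
end
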